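/- For a feedforward PCN in the prediction phase (no output clamping), the configuration x^l_i = μ^l_i for all l < l_max (with x^{l_max} = s^in) is a global minimum of the free energy F, with F = 0, and at this configuration the value nodes equal the feedforward activations of the corresponding ANN with the same weights: x^l_i = y^l_i for all l. -/

import Mathlib

/-!
A configuration satisfying `x^l = μ^l` on every free layer has zero prediction errors, so
`F = 0`; as `F` is a sum of squares, `0` is its global minimum. The equations `x^l = μ^l`
determine each layer from the one above, so two configurations satisfying them and agreeing on
the input layer agree everywhere, by downward induction on `l`; the ANN forward pass is one of
them.
-/

/-- PCN prediction `μ^l_i = ∑_j θ^{l+1}_{i,j} f(x^{l+1}_j)`. -/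
noncomputable def mu (n : ℕ → ℕ) (θ : ℕ → ℕ → ℕ → ℝ) (f : ℝ → ℝ)
    (x : ℕ → ℕ → ℝ) (l i : ℕ) : ℝ :=
  ∑ j ∈ Finset.range (n (l + 1)), θ (l + 1) i j * f (x (l + 1) j)

/-- PCN free energy `F = ∑_{l=0}^{l_max−1} ∑_i (1/2)(x^l_i − μ^l_i)^2`. -/
noncomputable def freeEnergy (L : ℕ) (n : ℕ → ℕ) (θ : ℕ → ℕ → ℕ → ℝ) (f : ℝ → ℝ)
    (x : ℕ → ℕ → ℝ) : ℝ :=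
  ∑ l ∈ Finset.range L, ∑ i ∈ Finset.range (n l),
    (1 / 2) * (x l i - mu n θ f x l i) ^ 2

section

variable {L : ℕ} {n : ℕ → ℕ} {θ : ℕ → ℕ → ℕ → ℝ} {f : ℝ → ℝ} {x y : ℕ → ℕ → ℝ}

theorem freeEnergy_nonneg : 0 ≤ freeEnergy L n θ f x :=
  Finset.sum_nonneg fun _ _ => Finset.sum_nonneg fun _ _ => by positivity

theorem freeEnergy_eq_zero_of_eq_mu (hx : ∀ l < L, ∀ i, x l i = mu n θ f x l i) :
    freeEnergy L n θ f x = 0 :=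
  Finset.sum_eq_zero fun l hl => Finset.sum_eq_zero fun i _ => by
    rw [← hx l (Finset.mem_range.mp hl) i, sub_self]
    ring

theorem mu_congr {l : ℕ} (h : ∀ j, x (l + 1) j = y (l + 1) j) (i : ℕ) :
    mu n θ f x l i = mu n θ f y l i :=
  Finset.sum_congr rfl fun j _ => by rw [h j]

theorem eq_of_eq_mu_of_top_eq (hx : ∀ l < L, ∀ i, x l i = mu n θ f x l i)
    (hy : ∀ l < L, ∀ i, y l i = mu n θ f y l i) (htop : ∀ i, x L i = y L i) :
    ∀ l ≤ L, ∀ i, x l i = y l i := by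
  intro l hl
  induction hl using Nat.decreasingInduction with
  | self => exact htop
  | of_succ l hl ih => exact fun i => by rw [hx l hl i, hy l hl i, mu_congr ih]

end

theorem pcn_prediction_fixed_point_general
    (L : ℕ) (n : ℕ → ℕ) (θ : ℕ → ℕ → ℕ → ℝ) (f : ℝ → ℝ)
    (sIn : ℕ → ℝ) (x y : ℕ → ℕ → ℝ)
    (hxL : ∀ i, x L i = sIn i)
    (hx : ∀ l < L, ∀ i, x l i = mu n θ f x l i)
    (hyL : ∀ i, y L i = sIn i)
    (hyRec : ∀ l < L, ∀ i,
      y l i = ∑ j ∈ Finset.range (n (l + 1)), θ (l + 1) i j * f (y (l + 1) j)) :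
    freeEnergy L n θ f x = 0 ∧
    (∀ x' : ℕ → ℕ → ℝ, (∀ i, x' L i = sIn i) →
      freeEnergy L n θ f x ≤ freeEnergy L n θ f x') ∧
    (∀ l ≤ L, ∀ i, x l i = y l i) := by
  have hF : freeEnergy L n θ f x = 0 := freeEnergy_eq_zero_of_eq_mu hx
  refine ⟨hF, fun x' _ => hF ▸ freeEnergy_nonneg, ?_⟩
  exact eq_of_eq_mu_of_top_eq hx hyRec fun i => (hxL i).trans (hyL i).symm

/-- for a feedforward PCN in the prediction phase (input clamped to
`s^in`, no output clamping), the configuration with `x^l_i = μ^l_i` for all `l < l_max`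
is a global minimum of the free energy among input-clamped configurations, with
`F = 0`, and there the value nodes equal the feedforward activations of the
corresponding ANN with the same weights: `x^l_i = y^l_i` for all `l`. -/
theorem pcn_prediction_fixed_point
    (L : ℕ) (n : ℕ → ℕ) (θ : ℕ → ℕ → ℕ → ℝ) (f : ℝ → ℝ) (hf : Differentiable ℝ f)
    (sIn : ℕ → ℝ) (x y : ℕ → ℕ → ℝ)
    (hxL : ∀ i, x L i = sIn i)
    (hx : ∀ l < L, ∀ i, x l i = mu n θ f x l i)
    (hyL : ∀ i, y L i = sIn i)
    (hyRec : ∀ l < L, ∀ i,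
      y l i = ∑ j ∈ Finset.range (n (l + 1)), θ (l + 1) i j * f (y (l + 1) j)) :
    freeEnergy L n θ f x = 0 ∧
    (∀ x' : ℕ → ℕ → ℝ, (∀ i, x' L i = sIn i) →
      freeEnergy L n θ f x ≤ freeEnergy L n θ f x') ∧
    (∀ l ≤ L, ∀ i, x l i = y l i) :=
  pcn_prediction_fixed_point_general L n θ f sIn x y hxL hx hyL hyRec
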